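/- Let S₀, S₁, …, S_k ⊆ B be pairwise isolated subsets with 0 < π(S_i) ≤ 1/2 for every i. Then (E_k − E₀)/(2(‖H‖ − E₀)) ≤ max_{i=0,…,k} π(∂S_i)/π(S_i). -/

import Mathlib

open scoped BigOperators ComplexOrder

/-- The ℓ²-operator norm of a matrix over ℂ. -/
noncomputable def opNorm {B : Type*} [Fintype B] [DecidableEq B] (H : Matrix B B ℂ) : ℝ :=
  ‖Matrix.toEuclideanCLM (𝕜 := ℂ) H‖

/-- The ground-state probability measure of a subset `S`. -/
noncomputable def piS {B : Type*} (ψ : B → ℂ) (S : Finset B) : ℝ :=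
  ∑ z ∈ S, ‖ψ z‖ ^ 2

open scoped Classical in
/-- The interior boundary `∂S` of the set `S` with respect to the matrix `H`. -/
noncomputable def bdry {B : Type*} [Fintype B] (H : Matrix B B ℂ) (S : Finset B) : Finset B :=
  S.filter (fun x => ∃ y ∉ S, H x y ≠ 0)

/-!
Write `A = H - E₀` and `c = ‖H‖ - E₀`, so that `0 ≤ A ≤ c` and `Aψ = 0`. For `ψ_S`, the
restriction of `ψ` to `S`, the vector `Aψ_S = -Aψ_{B∖S}` vanishes on `S ∖ ∂S`, hence by
Cauchy–Schwarz and `‖Aψ_S‖² ≤ c⟪ψ_S, Aψ_S⟫`,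
`⟪ψ_S, Aψ_S⟫ = ⟪ψ_{∂S}, Aψ_S⟫ ≤ (π(∂S) · c⟪ψ_S, Aψ_S⟫)^{1/2}`, i.e. `⟪ψ_S, Aψ_S⟫ ≤ c π(∂S)`.
Isolated sets give vectors `ψ_{S_i}` orthogonal for both `⟪·, ·⟫` and `⟪·, A ·⟫`, so every
combination of them has Rayleigh quotient at most `c · maxᵢ π(∂Sᵢ)/π(Sᵢ)`. By min-max some nonzero
combination is orthogonal to the eigenvectors of `E₀, …, E_{k-1}`, so its Rayleigh quotient is at
least `E_k - E₀`.
-/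

open scoped InnerProductSpace

section InnerProductSpace

variable {𝕜 E ι : Type*} [RCLike 𝕜] [NormedAddCommGroup E] [InnerProductSpace 𝕜 E] [Fintype ι]
  {T : E →ₗ[𝕜] E}

theorem re_inner_le_mul_norm_sq_of_inner_eq {v b y : E} {c : ℝ} (hc : 0 ≤ c)
    (hy : ‖y‖ ^ 2 ≤ c * RCLike.re ⟪v, y⟫_𝕜) (hb : ⟪b, y⟫_𝕜 = ⟪v, y⟫_𝕜) :
    RCLike.re ⟪v, y⟫_𝕜 ≤ c * ‖b‖ ^ 2 := by
  set s := RCLike.re ⟪v, y⟫_𝕜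
  rcases le_or_gt s 0 with hs | hs
  · exact hs.trans (by positivity)
  have hcs : s ≤ ‖b‖ * ‖y‖ := by simpa only [s, hb] using re_inner_le_norm (𝕜 := 𝕜) b y
  refine le_of_mul_le_mul_right ?_ hs
  calc s * s ≤ (‖b‖ * ‖y‖) ^ 2 := by rw [← sq]; exact pow_le_pow_left₀ hs.le hcs 2
    _ = ‖b‖ ^ 2 * ‖y‖ ^ 2 := by ring
    _ ≤ ‖b‖ ^ 2 * (c * s) := by gcongr
    _ = c * ‖b‖ ^ 2 * s := by ring

theorem exists_ne_zero_forall_inner_sum_smul_eq_zero {κ : Type*} [Fintype κ]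
    (hcard : Fintype.card κ < Fintype.card ι) (f : κ → E) (v : ι → E) :
    ∃ c : ι → 𝕜, c ≠ 0 ∧ ∀ j, ⟪f j, ∑ i, c i • v i⟫_𝕜 = 0 := by
  let L : (ι → 𝕜) →ₗ[𝕜] κ → 𝕜 :=
    LinearMap.pi fun j => innerₛₗ 𝕜 (f j) ∘ₗ Fintype.linearCombination 𝕜 v
  have hker : LinearMap.ker L ≠ ⊥ := LinearMap.ker_ne_bot_of_finrank_lt (by simpa using hcard)
  obtain ⟨c, hcL, hc⟩ := (Submodule.ne_bot_iff _).mp hker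
  refine ⟨c, hc, fun j => ?_⟩
  simpa [L, Fintype.linearCombination_apply] using congrFun hcL j

theorem inner_sum_smul_map_sum_smul {v : ι → E} (hv : Pairwise fun i j => ⟪v i, T (v j)⟫_𝕜 = 0)
    (c : ι → 𝕜) :
    ⟪∑ i, c i • v i, T (∑ i, c i • v i)⟫_𝕜 = ∑ i, ((‖c i‖ ^ 2 : ℝ) : 𝕜) * ⟪v i, T (v i)⟫_𝕜 := by
  simp only [map_sum, map_smul, sum_inner, inner_sum, inner_smul_left, inner_smul_right]
  refine Finset.sum_congr rfl fun i _ => ?_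
  rw [Finset.sum_eq_single i (fun j _ hji => by rw [hv hji, mul_zero]) (by simp),
    ← mul_assoc, mul_comm, RCLike.mul_conj]
  push_cast
  ring

theorem re_inner_sum_smul_map_le {v : ι → E} (hv : Pairwise fun i j => ⟪v i, v j⟫_𝕜 = 0)
    (hTv : Pairwise fun i j => ⟪v i, T (v j)⟫_𝕜 = 0) {a : ℝ}
    (ha : ∀ i, RCLike.re ⟪v i, T (v i)⟫_𝕜 ≤ a * ‖v i‖ ^ 2) (c : ι → 𝕜) :
    RCLike.re ⟪∑ i, c i • v i, T (∑ i, c i • v i)⟫_𝕜 ≤ a * ‖∑ i, c i • v i‖ ^ 2 := by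
  have hnorm : ‖∑ i, c i • v i‖ ^ 2 = ∑ i, ‖c i‖ ^ 2 * ‖v i‖ ^ 2 := by
    have := inner_sum_smul_map_sum_smul (T := LinearMap.id) hv c
    simp only [LinearMap.id_apply, inner_self_eq_norm_sq_to_K] at this
    exact_mod_cast this
  rw [inner_sum_smul_map_sum_smul hTv, hnorm, map_sum, Finset.mul_sum]
  refine Finset.sum_le_sum fun i _ => ?_
  rw [RCLike.re_ofReal_mul, mul_left_comm]
  exact mul_le_mul_of_nonneg_left (ha i) (sq_nonneg _)

namespace OrthonormalBasis

variable {u : OrthonormalBasis ι 𝕜 E} {μ : ι → ℝ}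

theorem inner_apply_of_apply_eq_smul (hT : ∀ i, T (u i) = (μ i : 𝕜) • u i) (i : ι) (x : E) :
    ⟪u i, T x⟫_𝕜 = μ i * ⟪u i, x⟫_𝕜 := by
  classical
  conv_lhs => rw [← u.sum_repr' x]
  simp [hT, inner_sum, inner_smul_right, u.inner_eq_ite, mul_comm]

theorem re_inner_apply_self_eq_sum (hT : ∀ i, T (u i) = (μ i : 𝕜) • u i) (x : E) :
    RCLike.re ⟪x, T x⟫_𝕜 = ∑ i, μ i * ‖⟪u i, x⟫_𝕜‖ ^ 2 := by
  rw [← u.sum_inner_mul_inner x (T x), map_sum]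
  refine Finset.sum_congr rfl fun i _ => ?_
  rw [u.inner_apply_of_apply_eq_smul hT, ← inner_conj_symm x, mul_left_comm, RCLike.conj_mul]
  norm_cast

theorem norm_apply_sq_eq_sum (hT : ∀ i, T (u i) = (μ i : 𝕜) • u i) (x : E) :
    ‖T x‖ ^ 2 = ∑ i, μ i ^ 2 * ‖⟪u i, x⟫_𝕜‖ ^ 2 := by
  simp [← u.sum_sq_norm_inner_right (T x), u.inner_apply_of_apply_eq_smul hT, mul_pow]

theorem norm_apply_sq_le_mul_re_inner (hT : ∀ i, T (u i) = (μ i : 𝕜) • u i) {c : ℝ}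
    (hμ : ∀ i, 0 ≤ μ i ∧ μ i ≤ c) (x : E) : ‖T x‖ ^ 2 ≤ c * RCLike.re ⟪x, T x⟫_𝕜 := by
  rw [u.norm_apply_sq_eq_sum hT, u.re_inner_apply_self_eq_sum hT, Finset.mul_sum]
  refine Finset.sum_le_sum fun i _ => ?_
  rw [sq, mul_assoc]
  exact mul_le_mul_of_nonneg_right (hμ i).2 (mul_nonneg (hμ i).1 (sq_nonneg _))

theorem mul_norm_sq_le_re_inner (hT : ∀ i, T (u i) = (μ i : 𝕜) • u i) {a : ℝ} {x : E}
    (hx : ∀ i, μ i < a → ⟪u i, x⟫_𝕜 = 0) : a * ‖x‖ ^ 2 ≤ RCLike.re ⟪x, T x⟫_𝕜 := by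
  rw [← u.sum_sq_norm_inner_right x, u.re_inner_apply_self_eq_sum hT, Finset.mul_sum]
  refine Finset.sum_le_sum fun i _ => ?_
  rcases lt_or_ge (μ i) a with h | h
  · simp [hx i h]
  · exact mul_le_mul_of_nonneg_right h (sq_nonneg _)

theorem exists_ne_zero_mul_norm_sq_le_re_inner (hT : ∀ i, T (u i) = (μ i : 𝕜) • u i) {n : ℕ}
    (σ : Fin n ≃ ι) {e : ℕ → ℝ} (he : Monotone e) (hσ : ∀ m : Fin n, e m = μ (σ m)) {k : ℕ}
    (hk : k ≤ n) (v : Fin (k + 1) → E) :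
    ∃ c : Fin (k + 1) → 𝕜, c ≠ 0 ∧
      e k * ‖∑ i, c i • v i‖ ^ 2 ≤ RCLike.re ⟪∑ i, c i • v i, T (∑ i, c i • v i)⟫_𝕜 := by
  obtain ⟨c, hc, horth⟩ := exists_ne_zero_forall_inner_sum_smul_eq_zero (𝕜 := 𝕜)
    (by simp : Fintype.card (Fin k) < Fintype.card (Fin (k + 1)))
    (fun j => u (σ (Fin.castLE hk j))) v
  refine ⟨c, hc, u.mul_norm_sq_le_re_inner hT fun i hi => ?_⟩
  obtain ⟨m, rfl⟩ := σ.surjective i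
  have hmk : (m : ℕ) < k := by
    by_contra! h
    exact (hσ m ▸ hi).not_ge (he h)
  simpa using horth ⟨m, hmk⟩

theorem le_of_pairwise_inner_eq_zero_of_re_inner_le (hT : ∀ i, T (u i) = (μ i : 𝕜) • u i)
    {n : ℕ} (σ : Fin n ≃ ι) {e : ℕ → ℝ} (he : Monotone e) (hσ : ∀ m : Fin n, e m = μ (σ m))
    {k : ℕ} {v : Fin (k + 1) → E} (hv0 : ∀ i, v i ≠ 0)
    (hv : Pairwise fun i j => ⟪v i, v j⟫_𝕜 = 0) (hTv : Pairwise fun i j => ⟪v i, T (v j)⟫_𝕜 = 0)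
    {a : ℝ} (ha : ∀ i, RCLike.re ⟪v i, T (v i)⟫_𝕜 ≤ a * ‖v i‖ ^ 2) : e k ≤ a := by
  have hindep := linearIndependent_of_ne_zero_of_inner_eq_zero hv0 hv
  have : FiniteDimensional 𝕜 E := .of_basis u.toBasis
  have hk : k + 1 ≤ n := by
    simpa [Module.finrank_eq_card_basis u.toBasis, ← Fintype.card_congr σ]
      using hindep.fintype_card_le_finrank
  obtain ⟨c, hc, hlow⟩ := u.exists_ne_zero_mul_norm_sq_le_re_inner hT σ he hσ (by omega) v
  have hw : 0 < ‖∑ i, c i • v i‖ := norm_pos_iff.mpr fun h =>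
    hc (funext (Fintype.linearIndependent_iff.mp hindep c h))
  exact le_of_mul_le_mul_right (hlow.trans (re_inner_sum_smul_map_le hv hTv ha c)) (pow_pos hw 2)

end OrthonormalBasis

end InnerProductSpace

section Matrix

open scoped Matrix

variable {B : Type*} [Fintype B]

theorem mem_bdry {H : Matrix B B ℂ} {S : Finset B} {x : B} :
    x ∈ bdry H S ↔ x ∈ S ∧ ∃ y ∉ S, H x y ≠ 0 := by
  simp [bdry]

theorem bdry_subset (H : Matrix B B ℂ) (S : Finset B) : bdry H S ⊆ S :=
  fun _ hx => (mem_bdry.mp hx).1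

variable [DecidableEq B]

namespace Matrix.IsHermitian

variable {H : Matrix B B ℂ} (hH : H.IsHermitian)
include hH

theorem toEuclideanCLM_eigenvectorBasis (b : B) :
    Matrix.toEuclideanCLM (𝕜 := ℂ) H (hH.eigenvectorBasis b) =
      (hH.eigenvalues b : ℂ) • hH.eigenvectorBasis b := by
  ext x
  simpa [Matrix.mulVec] using congrFun (hH.mulVec_eigenvectorBasis b) x

theorem toEuclideanCLM_sub_smul_one_eigenvectorBasis (e : ℝ) (b : B) :
    (Matrix.toEuclideanCLM (𝕜 := ℂ) H - (e : ℂ) • 1) (hH.eigenvectorBasis b) =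
      ((hH.eigenvalues b - e : ℝ) : ℂ) • hH.eigenvectorBasis b := by
  simp [hH.toEuclideanCLM_eigenvectorBasis, sub_smul]

theorem eigenvalues_le_opNorm (b : B) : hH.eigenvalues b ≤ opNorm H := by
  have h := (Matrix.toEuclideanCLM (𝕜 := ℂ) H).le_opNorm (hH.eigenvectorBasis b)
  rw [hH.toEuclideanCLM_eigenvectorBasis, norm_smul, hH.eigenvectorBasis.orthonormal.1 b,
    mul_one, mul_one, Complex.norm_real, Real.norm_eq_abs] at h
  exact (le_abs_self _).trans h

theorem le_opNorm_of_forall_le_eigenvalues [Nonempty B] {e : ℝ}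
    (he : ∀ b, e ≤ hH.eigenvalues b) : e ≤ opNorm H :=
  (he (Classical.arbitrary B)).trans (hH.eigenvalues_le_opNorm _)

end Matrix.IsHermitian

def restrictVec (ψ : B → ℂ) (S : Finset B) : EuclideanSpace ℂ B :=
  WithLp.toLp 2 fun x => if x ∈ S then ψ x else 0

theorem inner_restrictVec_left (ψ : B → ℂ) (S : Finset B) (w : EuclideanSpace ℂ B) :
    ⟪restrictVec ψ S, w⟫_ℂ = ∑ x ∈ S, star (ψ x) * w x := by
  simp [restrictVec, PiLp.inner_apply, apply_ite, Finset.sum_ite_mem, mul_comm]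

theorem norm_restrictVec_sq (ψ : B → ℂ) (S : Finset B) : ‖restrictVec ψ S‖ ^ 2 = piS ψ S := by
  simp [EuclideanSpace.norm_sq_eq, restrictVec, piS, apply_ite]

theorem restrictVec_ne_zero {ψ : B → ℂ} {S : Finset B} (h : 0 < piS ψ S) :
    restrictVec ψ S ≠ 0 := by
  rw [← norm_ne_zero_iff, ← pow_ne_zero_iff two_ne_zero, norm_restrictVec_sq]
  exact h.ne'

theorem inner_restrictVec_of_disjoint (ψ : B → ℂ) {S S' : Finset B} (h : Disjoint S S') :
    ⟪restrictVec ψ S, restrictVec ψ S'⟫_ℂ = 0 := by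
  rw [inner_restrictVec_left]
  refine Finset.sum_eq_zero fun x hx => ?_
  simp [restrictVec, Finset.disjoint_left.mp h hx]

theorem inner_restrictVec_toEuclideanCLM_of_isolated (ψ : B → ℂ) {H : Matrix B B ℂ}
    {S S' : Finset B} (h : ∀ x ∈ S, ∀ y ∈ S', H x y = 0) :
    ⟪restrictVec ψ S, Matrix.toEuclideanCLM (𝕜 := ℂ) H (restrictVec ψ S')⟫_ℂ = 0 := by
  rw [inner_restrictVec_left]
  refine Finset.sum_eq_zero fun x hx => ?_
  have hHv : (H *ᵥ WithLp.ofLp (restrictVec ψ S')) x = 0 :=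
    Finset.sum_eq_zero fun y _ => by by_cases hy : y ∈ S' <;> simp [restrictVec, hy, h x hx]
  simp [hHv]

theorem inner_restrictVec_sub_smul_one_of_isolated (ψ : B → ℂ) {H : Matrix B B ℂ} (e : ℂ)
    {S S' : Finset B} (hdisj : Disjoint S S') (hiso : ∀ x ∈ S, ∀ y ∈ S', H x y = 0) :
    ⟪restrictVec ψ S, (Matrix.toEuclideanCLM (𝕜 := ℂ) H - e • 1) (restrictVec ψ S')⟫_ℂ = 0 := by
  simp [inner_restrictVec_of_disjoint ψ hdisj, inner_restrictVec_toEuclideanCLM_of_isolated ψ hiso]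

theorem mulVec_restrictVec_of_mem_of_notMem_bdry (ψ : B → ℂ) {H : Matrix B B ℂ} {S : Finset B}
    {x : B} (hx : x ∈ S) (hxb : x ∉ bdry H S) :
    (H *ᵥ WithLp.ofLp (restrictVec ψ S)) x = (H *ᵥ ψ) x := by
  refine Finset.sum_congr rfl fun y _ => ?_
  by_cases hy : y ∈ S
  · simp [restrictVec, hy]
  · have : H x y = 0 := by
      by_contra hxy
      exact hxb (mem_bdry.mpr ⟨hx, y, hy, hxy⟩)
    simp [this]

theorem inner_restrictVec_bdry {ψ : B → ℂ} {H : Matrix B B ℂ} {e : ℝ} (hψ : H *ᵥ ψ = (e : ℂ) • ψ)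
    (S : Finset B) :
    ⟪restrictVec ψ (bdry H S),
        (Matrix.toEuclideanCLM (𝕜 := ℂ) H - (e : ℂ) • 1) (restrictVec ψ S)⟫_ℂ =
      ⟪restrictVec ψ S, (Matrix.toEuclideanCLM (𝕜 := ℂ) H - (e : ℂ) • 1) (restrictVec ψ S)⟫_ℂ := by
  rw [inner_restrictVec_left, inner_restrictVec_left]
  refine Finset.sum_subset (bdry_subset H S) fun x hx hxb => ?_
  have hHv := mulVec_restrictVec_of_mem_of_notMem_bdry ψ hx hxb
  rw [hψ] at hHv
  have hAv : (Matrix.toEuclideanCLM (𝕜 := ℂ) H - (e : ℂ) • 1) (restrictVec ψ S) x = 0 := by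
    simp only [sub_apply, smul_apply, one_apply_eq_self, PiLp.sub_apply, PiLp.smul_apply,
      Matrix.ofLp_toEuclideanCLM, hHv]
    simp [restrictVec, hx]
  rw [hAv, mul_zero]

theorem re_inner_restrictVec_le [Nonempty B] {H : Matrix B B ℂ} (hH : H.IsHermitian)
    {ψ : B → ℂ} {e : ℝ} (hψ : H *ᵥ ψ = (e : ℂ) • ψ) (he : ∀ b, e ≤ hH.eigenvalues b)
    (S : Finset B) :
    RCLike.re
        ⟪restrictVec ψ S, (Matrix.toEuclideanCLM (𝕜 := ℂ) H - (e : ℂ) • 1) (restrictVec ψ S)⟫_ℂ ≤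
      (opNorm H - e) * piS ψ (bdry H S) := by
  rw [← norm_restrictVec_sq]
  refine re_inner_le_mul_norm_sq_of_inner_eq
    (sub_nonneg.2 (hH.le_opNorm_of_forall_le_eigenvalues he)) ?_ (inner_restrictVec_bdry hψ S)
  have hA := hH.eigenvectorBasis.norm_apply_sq_le_mul_re_inner
    (T := ((Matrix.toEuclideanCLM (𝕜 := ℂ) H - (e : ℂ) • 1 : _ →L[ℂ] _) : _ →ₗ[ℂ] _))
    (hH.toEuclideanCLM_sub_smul_one_eigenvectorBasis e)
    (fun b => ⟨sub_nonneg.2 (he b), sub_le_sub_right (hH.eigenvalues_le_opNorm b) e⟩)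
    (restrictVec ψ S)
  exact hA

end Matrix

theorem stmt_1_general {B : Type*} [Fintype B] [DecidableEq B]
    (H : Matrix B B ℂ) (hH : H.IsHermitian)
    -- `E` enumerates the eigenvalues of `H` (with multiplicity) in increasing order:
    (E : ℕ → ℝ) (hmono : Monotone E)
    (henum : ∃ σ : Fin (Fintype.card B) ≃ B,
      ∀ i : Fin (Fintype.card B), E i = hH.eigenvalues (σ i))
    -- `ψ` is a unit-norm ground state:
    (ψ : B → ℂ)
    (hground : H.mulVec ψ = (E 0 : ℂ) • ψ)
    -- the subsets `S 0, …, S k` are pairwise disjoint and isolated: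
    (k : ℕ) (S : Fin (k + 1) → Finset B)
    (hdisj : ∀ i j, i ≠ j → Disjoint (S i) (S j))
    (hiso : ∀ i j, i ≠ j → ∀ x ∈ S i, ∀ y ∈ S j, H x y = 0)
    (hS0 : ∀ i, 0 < piS ψ (S i)) :
    (E k - E 0) / (2 * (opNorm H - E 0)) ≤
      Finset.univ.sup' Finset.univ_nonempty
        (fun i : Fin (k + 1) => piS ψ (bdry H (S i)) / piS ψ (S i)) := by
  obtain ⟨σ, hσ⟩ := henum
  set A := Matrix.toEuclideanCLM (𝕜 := ℂ) H - (E 0 : ℂ) • 1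
  set v : Fin (k + 1) → EuclideanSpace ℂ B := fun i => restrictVec ψ (S i)
  set r : Fin (k + 1) → ℝ := fun i => piS ψ (bdry H (S i)) / piS ψ (S i)
  set M := Finset.univ.sup' Finset.univ_nonempty r
  set c := opNorm H - E 0
  have hE0 : ∀ b, E 0 ≤ hH.eigenvalues b := fun b => by
    simpa [hσ] using hmono (Nat.zero_le (σ.symm b))
  have : Nonempty B := (Finset.nonempty_of_sum_ne_zero (hS0 0).ne').nonempty
  have hc : 0 ≤ c := sub_nonneg.2 (hH.le_opNorm_of_forall_le_eigenvalues hE0)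
  have hM : 0 ≤ M := Finset.le_sup'_of_le r (Finset.mem_univ 0)
    (div_nonneg (by unfold piS; positivity) (hS0 0).le)
  have hper : ∀ i, RCLike.re ⟪v i, A (v i)⟫_ℂ ≤ c * M * ‖v i‖ ^ 2 := fun i =>
    calc _ ≤ c * piS ψ (bdry H (S i)) := re_inner_restrictVec_le hH hground hE0 (S i)
      _ ≤ c * (M * piS ψ (S i)) := by
        gcongr
        exact (div_le_iff₀ (hS0 i)).mp (Finset.le_sup' r (Finset.mem_univ i))
      _ = c * M * ‖v i‖ ^ 2 := by rw [norm_restrictVec_sq]; ring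
  have hgap : E k - E 0 ≤ c * M :=
    hH.eigenvectorBasis.le_of_pairwise_inner_eq_zero_of_re_inner_le
      (T := (A : EuclideanSpace ℂ B →ₗ[ℂ] EuclideanSpace ℂ B))
      (hH.toEuclideanCLM_sub_smul_one_eigenvectorBasis (E 0)) σ
      (μ := fun b => hH.eigenvalues b - E 0) (e := fun m => E m - E 0)
      (fun _ _ h => sub_le_sub_right (hmono h) _) (fun m => by simp [hσ])
      (fun i => restrictVec_ne_zero (hS0 i))
      (fun i j hij => inner_restrictVec_of_disjoint ψ (hdisj i j hij))
      (fun i j hij => inner_restrictVec_sub_smul_one_of_isolated ψ _ (hdisj i j hij) (hiso i j hij))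
      hper
  exact div_le_of_le_mul₀ (by positivity) hM (by linarith [mul_nonneg hc hM])

/-- Theorem 2 of the paper: if `S₀,…,S_k` are pairwise isolated subsets each with
`0 < π(Sᵢ) ≤ 1/2`, then `(E_k - E₀)/(2(‖H‖-E₀)) ≤ max_i π(∂Sᵢ)/π(Sᵢ)`. -/
theorem stmt_1 {B : Type*} [Fintype B] [DecidableEq B]
    (H : Matrix B B ℂ) (hH : H.IsHermitian) (hPSD : H.PosSemidef)
    -- `E` enumerates the eigenvalues of `H` (with multiplicity) in increasing order:
    (E : ℕ → ℝ) (hmono : Monotone E)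
    (henum : ∃ σ : Fin (Fintype.card B) ≃ B,
      ∀ i : Fin (Fintype.card B), E i = hH.eigenvalues (σ i))
    -- `ψ` is a unit-norm ground state:
    (ψ : B → ℂ) (hψnorm : ∑ z, ‖ψ z‖ ^ 2 = 1)
    (hground : H.mulVec ψ = (E 0 : ℂ) • ψ)
    -- the subsets `S 0, …, S k` are pairwise disjoint and isolated:
    (k : ℕ) (S : Fin (k + 1) → Finset B)
    (hdisj : ∀ i j, i ≠ j → Disjoint (S i) (S j))
    (hiso : ∀ i j, i ≠ j → ∀ x ∈ S i, ∀ y ∈ S j, H x y = 0)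
    (hS0 : ∀ i, 0 < piS ψ (S i)) (hS12 : ∀ i, piS ψ (S i) ≤ 1 / 2) :
    (E k - E 0) / (2 * (opNorm H - E 0)) ≤
      Finset.univ.sup' Finset.univ_nonempty
        (fun i : Fin (k + 1) => piS ψ (bdry H (S i)) / piS ψ (S i)) :=
  stmt_1_general H hH E hmono henum ψ hground k S hdisj hiso hS0
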